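/- arXiv:math/9903140 — 4 statements merged into one kernel-verified Lean document; each statement's English description precedes it below -/
import Mathlib

section
/- Let C be a category with duality and let η ∈ G(C). If φ : M → D(M) is an ε-Hermitian form, then the form ψ = η∘φ (meaning ψ = η_{D(M)} ∘ φ) is (ε ∘ η̄ ∘ η^{-1})-Hermitian. Consequently, the congruence classes of ε-Hermitian forms depend only on the class of ε in the quotient group {ε ∈ G(C) : εε̄ = 1}/{η̄η^{-1} : η ∈ G(C)}. -/
open CategoryTheory

universe v u

/-- A duality `(D, s)` on a category `C`: a contravariant functor `D : C → C`
together with a natural isomorphism `s : Id → D ∘ D` satisfying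
`s_{D(M)} = D(s_M)⁻¹`. -/
structure Duality (C : Type u) [Category.{v} C] where
  D : C → C
  map : {M N : C} → (M ⟶ N) → (D N ⟶ D M)
  map_id : ∀ (M : C), map (𝟙 M) = 𝟙 (D M)
  map_comp : ∀ {M N P : C} (f : M ⟶ N) (g : N ⟶ P), map (f ≫ g) = map g ≫ map f
  s : ∀ (M : C), M ⟶ D (D M)
  sInv : ∀ (M : C), D (D M) ⟶ M
  s_sInv : ∀ M, s M ≫ sInv M = 𝟙 M
  sInv_s : ∀ M, sInv M ≫ s M = 𝟙 (D (D M))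
  s_natural : ∀ {M N : C} (f : M ⟶ N), f ≫ s N = s M ≫ map (map f)
  s_dual : ∀ M, s (D M) ≫ map (s M) = 𝟙 (D M)
  dual_s : ∀ M, map (s M) ≫ s (D M) = 𝟙 (D (D (D M)))


/-- The bar involution on symmetries: `(ε̄)_M = s_M⁻¹ ∘ D(ε_{D(M)}) ∘ s_M`. -/
def Duality.bar {C : Type u} [Category.{v} C] (Δ : Duality C)
    (ε : ∀ M : C, M ⟶ M) : ∀ M : C, M ⟶ M :=
  fun M => Δ.s M ≫ Δ.map (ε (Δ.D M)) ≫ Δ.sInv M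

/-- If `φ : M → D(M)` is an `ε`-Hermitian form and `η` is a symmetry, then the
form `ψ = η ∘ φ` is `(ε ∘ η̄ ∘ η⁻¹)`-Hermitian. -/
theorem twist_hermitian {C : Type u} [Category.{v} C]
    (Δ : Duality C) (ε η : ∀ M : C, M ⟶ M)
    (hε_iso : ∀ M, IsIso (ε M)) [hη_iso : ∀ M : C, IsIso (η M)]
    (hε_nat : ∀ {M N : C} (f : M ⟶ N), f ≫ ε N = ε M ≫ f)
    (hη_nat : ∀ {M N : C} (f : M ⟶ N), f ≫ η N = η M ≫ f)
    (hε_compat : ∀ M : C, ε M ≫ Δ.s M = Δ.s M ≫ Δ.map (Δ.map (ε M)))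
    (hη_compat : ∀ M : C, η M ≫ Δ.s M = Δ.s M ≫ Δ.map (Δ.map (η M)))
    (M : C) (φ : M ⟶ Δ.D M)
    (hherm : Δ.s M ≫ Δ.map φ = φ ≫ ε (Δ.D M)) :
    Δ.s M ≫ Δ.map (φ ≫ η (Δ.D M)) =
      (φ ≫ η (Δ.D M)) ≫
        (ε (Δ.D M) ≫ Δ.bar η (Δ.D M) ≫ inv (η (Δ.D M))) := by
  have hsInv : ∀ {A B : C} (f : A ⟶ B), Δ.sInv A ≫ f = Δ.map (Δ.map f) ≫ Δ.sInv B := by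
    intro A B f
    calc Δ.sInv A ≫ f
        = Δ.sInv A ≫ (f ≫ Δ.s B) ≫ Δ.sInv B := by
          rw [Category.assoc, Δ.s_sInv, Category.comp_id]
      _ = Δ.sInv A ≫ (Δ.s A ≫ Δ.map (Δ.map f)) ≫ Δ.sInv B := by rw [Δ.s_natural f]
      _ = Δ.map (Δ.map f) ≫ Δ.sInv B := by
          rw [← Category.assoc, ← Category.assoc, Δ.sInv_s, Category.id_comp]
  have hbar_nat : φ ≫ Δ.bar η (Δ.D M) = Δ.bar η M ≫ φ := by
    simp only [Duality.bar]
    calc φ ≫ Δ.s (Δ.D M) ≫ Δ.map (η (Δ.D (Δ.D M))) ≫ Δ.sInv (Δ.D M)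
        = Δ.s M ≫ Δ.map (Δ.map φ) ≫ Δ.map (η (Δ.D (Δ.D M))) ≫ Δ.sInv (Δ.D M) := by
          rw [← Category.assoc, ← Category.assoc, Δ.s_natural φ, Category.assoc,
            Category.assoc]
      _ = Δ.s M ≫ Δ.map (η (Δ.D (Δ.D M)) ≫ Δ.map φ) ≫ Δ.sInv (Δ.D M) := by
          rw [Δ.map_comp, Category.assoc]
      _ = Δ.s M ≫ Δ.map (Δ.map φ ≫ η (Δ.D M)) ≫ Δ.sInv (Δ.D M) := by
          rw [hη_nat (Δ.map φ)]
      _ = Δ.s M ≫ Δ.map (η (Δ.D M)) ≫ Δ.map (Δ.map φ) ≫ Δ.sInv (Δ.D M) := by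
          rw [Δ.map_comp, Category.assoc]
      _ = (Δ.s M ≫ Δ.map (η (Δ.D M)) ≫ Δ.sInv M) ≫ φ := by
          rw [← hsInv φ]; simp only [Category.assoc]
  rw [Δ.map_comp]
  have hL : Δ.s M ≫ Δ.map (η (Δ.D M)) ≫ Δ.map φ
      = φ ≫ ε (Δ.D M) ≫ Δ.bar η (Δ.D M) := by
    calc Δ.s M ≫ Δ.map (η (Δ.D M)) ≫ Δ.map φ
        = (Δ.s M ≫ Δ.map (η (Δ.D M)) ≫ Δ.sInv M) ≫ Δ.s M ≫ Δ.map φ := by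
          simp only [Category.assoc]
          rw [← Category.assoc (Δ.sInv M), Δ.sInv_s, Category.id_comp]
      _ = Δ.bar η M ≫ φ ≫ ε (Δ.D M) := by rw [hherm]; rfl
      _ = (φ ≫ Δ.bar η (Δ.D M)) ≫ ε (Δ.D M) := by rw [hbar_nat, Category.assoc]
      _ = φ ≫ ε (Δ.D M) ≫ Δ.bar η (Δ.D M) := by
          rw [Category.assoc, hε_nat (Δ.bar η (Δ.D M))]
  rw [hL]
  calc φ ≫ ε (Δ.D M) ≫ Δ.bar η (Δ.D M)
      = φ ≫ ε (Δ.D M) ≫ Δ.bar η (Δ.D M) ≫ η (Δ.D M) ≫ inv (η (Δ.D M)) := by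
        simp
    _ = φ ≫ ε (Δ.D M) ≫ η (Δ.D M) ≫ Δ.bar η (Δ.D M) ≫ inv (η (Δ.D M)) := by
        rw [← Category.assoc (Δ.bar η (Δ.D M)), hη_nat (Δ.bar η (Δ.D M)),
          Category.assoc]
    _ = φ ≫ η (Δ.D M) ≫ ε (Δ.D M) ≫ Δ.bar η (Δ.D M) ≫ inv (η (Δ.D M)) := by
        rw [← Category.assoc (ε (Δ.D M)), ← hε_nat (η (Δ.D M)), Category.assoc]
    _ = (φ ≫ η (Δ.D M)) ≫ ε (Δ.D M) ≫ Δ.bar η (Δ.D M) ≫ inv (η (Δ.D M)) := by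
        rw [Category.assoc]
end

section
/- Let A be a Hilbert space, φ a Hermitian form on A represented by a bounded invertible self-adjoint operator A_φ, and suppose A = H₊ ⊕ H₋ is the spectral decomposition into positive and negative parts of A_φ. If L ⊆ A is any closed subspace on which φ is positive definite (⟨A_φ x, x⟩ > 0 for all nonzero x ∈ L), then the projection π : L → H₊ along H₋ (sending x = x₊ + x₋ to x₊) is injective with closed image. -/
open ContinuousLinearMap
set_option maxHeartbeats 1000000 in
/-- Let `A` be a Hilbert space, `Aφ` a bounded invertible self-adjoint
operator, and `A = H₊ ⊕ H₋` its spectral decomposition into positive and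
negative parts (`H₋ = H₊ᗮ`, both `Aφ`-invariant, with the form
`⟨x, x⟩_φ = ⟨Aφ x, x⟩` positive on nonzero vectors of `H₊` and nonpositive on
`H₋`). If `L ⊆ A` is a closed subspace on which the form is positive definite,
then the projection `π : L → H₊` along `H₋` is injective with closed image. -/

theorem projection_injective_closed_image
    {A : Type*} [NormedAddCommGroup A] [InnerProductSpace ℂ A] [CompleteSpace A]
    (Aφ : A →L[ℂ] A) (hsa : IsSelfAdjoint Aφ) (hunit : IsUnit Aφ)
    (Hp : Submodule ℂ A) [Hp.HasOrthogonalProjection]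
    (hHpc : IsClosed (Hp : Set A))
    (hinvp : ∀ x ∈ Hp, Aφ x ∈ Hp)
    (hinvm : ∀ x ∈ Hpᗮ, Aφ x ∈ Hpᗮ)
    (hposp : ∀ x ∈ Hp, x ≠ 0 → 0 < RCLike.re (inner ℂ (Aφ x) x : ℂ))
    (hnegm : ∀ x ∈ Hpᗮ, RCLike.re (inner ℂ (Aφ x) x : ℂ) ≤ 0)
    (L : Submodule ℂ A) (hLc : IsClosed (L : Set A))
    (hLpos : ∀ x ∈ L, x ≠ 0 → 0 < RCLike.re (inner ℂ (Aφ x) x : ℂ)) :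
    Function.Injective (fun x : L => Hp.orthogonalProjectionOnto (x : A)) ∧
    IsClosed (Set.range (fun x : L => Hp.orthogonalProjectionOnto (x : A))) := by
  classical
  haveI : CompleteSpace L := hLc.completeSpace_coe
  have hsym : ∀ x y : A, (inner ℂ (Aφ x) y : ℂ) = inner ℂ x (Aφ y) :=
    ContinuousLinearMap.isSelfAdjoint_iff_isSymmetric.mp hsa
  have hresym : ∀ x y : A, RCLike.re (inner ℂ (Aφ x) y : ℂ) = RCLike.re (inner ℂ (Aφ y) x : ℂ) := by
    intro x y
    rw [hsym x y]
    exact inner_re_symm _ _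
  -- inverse bound
  obtain ⟨u, hu⟩ := hunit
  set B : A →L[ℂ] A := ↑u⁻¹ with hBdef
  have hBA : ∀ x, B (Aφ x) = x := by
    intro x
    have h1 : (↑u⁻¹ * ↑u : A →L[ℂ] A) = 1 := u.inv_mul
    calc B (Aφ x) = ((↑u⁻¹ * ↑u : A →L[ℂ] A)) x := by rw [hu]; rfl
    _ = x := by rw [h1]; rfl
  have hnormB : ∀ x, ‖x‖ ≤ ‖B‖ * ‖Aφ x‖ := fun x => by
    conv_lhs => rw [← hBA x]
    exact B.le_opNorm _
  -- Cauchy–Schwarz for the negative form on Hpᗮ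
  have hCS : ∀ y ∈ Hpᗮ, ∀ z ∈ Hpᗮ,
      (RCLike.re (inner ℂ (Aφ y) z : ℂ))^2 ≤
      (-(RCLike.re (inner ℂ (Aφ y) y : ℂ))) * (-(RCLike.re (inner ℂ (Aφ z) z : ℂ))) := by
    intro y hy z hz
    have hquad : ∀ t : ℝ, 0 ≤ (-(RCLike.re (inner ℂ (Aφ z) z : ℂ))) * (t*t)
        + (-(2 * RCLike.re (inner ℂ (Aφ y) z : ℂ))) * t
        + (-(RCLike.re (inner ℂ (Aφ y) y : ℂ))) := by
      intro t
      have hmem : y + (t : ℂ) • z ∈ Hpᗮ := Hpᗮ.add_mem hy (Hpᗮ.smul_mem _ hz)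
      have h := hnegm _ hmem
      have hexp : RCLike.re (inner ℂ (Aφ (y + (t:ℂ)•z)) (y + (t:ℂ)•z) : ℂ)
          = RCLike.re (inner ℂ (Aφ y) y : ℂ) + 2*t* RCLike.re (inner ℂ (Aφ y) z : ℂ)
            + t*t* RCLike.re (inner ℂ (Aφ z) z : ℂ) := by
        rw [map_add, map_smul, inner_add_left, inner_add_right, inner_add_right,
          inner_smul_left, inner_smul_right, inner_smul_left, inner_smul_right]
        simp only [Complex.conj_ofReal, map_add, RCLike.re_to_complex, Complex.add_re,
          Complex.mul_re, Complex.ofReal_re, Complex.ofReal_im]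
        have hzy : (inner ℂ (Aφ z) y : ℂ).re = (inner ℂ (Aφ y) z : ℂ).re := by
          have := hresym z y
          simpa only [RCLike.re_to_complex] using this
        rw [hzy]
        ring
      rw [hexp] at h
      nlinarith [h]
    have hd := discrim_le_zero hquad
    rw [discrim] at hd
    nlinarith [hd]
  -- uniform negativity bound on Hpᗮ
  obtain ⟨c, hc, hcneg⟩ : ∃ c : ℝ, 0 < c ∧
      ∀ y ∈ Hpᗮ, c * ‖y‖^2 ≤ -(RCLike.re (inner ℂ (Aφ y) y : ℂ)) := by
    refine ⟨1 / (‖B‖^2 * ‖Aφ‖ + 1), by positivity, ?_⟩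
    intro y hy
    have hzy := hinvm y hy
    have hcs := hCS y hy (Aφ y) hzy
    have h0 : RCLike.re (inner ℂ (Aφ y) (Aφ y) : ℂ) = ‖Aφ y‖^2 := by
      rw [← inner_self_eq_norm_sq (𝕜 := ℂ)]
    have h1 : -(RCLike.re (inner ℂ (Aφ (Aφ y)) (Aφ y) : ℂ)) ≤ ‖Aφ‖ * ‖Aφ y‖^2 := by
      have h2 : ‖(inner ℂ (Aφ (Aφ y)) (Aφ y) : ℂ)‖ ≤ ‖Aφ (Aφ y)‖ * ‖Aφ y‖ :=
        norm_inner_le_norm _ _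
      have h3 : ‖Aφ (Aφ y)‖ ≤ ‖Aφ‖ * ‖Aφ y‖ := Aφ.le_opNorm _
      have h4 := abs_le.mp (RCLike.abs_re_le_norm (inner ℂ (Aφ (Aφ y)) (Aφ y) : ℂ))
      nlinarith [h2, h3, h4.1, mul_le_mul_of_nonneg_right h3 (norm_nonneg (Aφ y)),
        norm_nonneg (Aφ y)]
    rw [h0] at hcs
    have hneg : 0 ≤ -(RCLike.re (inner ℂ (Aφ y) y : ℂ)) := by linarith [hnegm y hy]
    have hAy2 : ‖Aφ y‖^2 ≤ ‖Aφ‖ * (-(RCLike.re (inner ℂ (Aφ y) y : ℂ))) := by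
      rcases eq_or_lt_of_le (norm_nonneg (Aφ y)) with h | h
      · have h0' : ‖Aφ y‖ = 0 := h.symm
        rw [h0']
        nlinarith [mul_nonneg (norm_nonneg Aφ) hneg]
      · have h5 : (-(RCLike.re (inner ℂ (Aφ y) y : ℂ))) * (-(RCLike.re (inner ℂ (Aφ (Aφ y)) (Aφ y) : ℂ)))
            ≤ (-(RCLike.re (inner ℂ (Aφ y) y : ℂ))) * (‖Aφ‖ * ‖Aφ y‖^2) :=
          mul_le_mul_of_nonneg_left h1 hneg
        have h6 : ‖Aφ y‖^2 * ‖Aφ y‖^2 ≤ (‖Aφ‖ * (-(RCLike.re (inner ℂ (Aφ y) y : ℂ)))) * ‖Aφ y‖^2 := by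
          nlinarith [hcs, h5]
        exact le_of_mul_le_mul_right h6 (pow_pos h 2)
    have hy2 : ‖y‖^2 ≤ ‖B‖^2 * ‖Aφ y‖^2 := by
      have := hnormB y
      nlinarith [norm_nonneg y, norm_nonneg (Aφ y), norm_nonneg B]
    have hfinal : ‖y‖^2 ≤ (‖B‖^2 * ‖Aφ‖ + 1) * (-(RCLike.re (inner ℂ (Aφ y) y : ℂ))) := by
      nlinarith [hneg, hy2, hAy2, sq_nonneg ‖B‖]
    rw [div_mul_eq_mul_div, div_le_iff₀ (by positivity)]
    nlinarith [hfinal]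
  -- orthogonal decomposition of the form
  have hdecomp : ∀ x : A, RCLike.re (inner ℂ (Aφ x) x : ℂ) =
      RCLike.re (inner ℂ (Aφ ((Hp.orthogonalProjectionOnto x : A))) ((Hp.orthogonalProjectionOnto x : A)) : ℂ)
      + RCLike.re (inner ℂ (Aφ (x - Hp.orthogonalProjectionOnto x)) (x - Hp.orthogonalProjectionOnto x) : ℂ) := by
    intro x
    set p : A := (Hp.orthogonalProjectionOnto x : A) with hp
    set m : A := x - p with hm
    have hpmem : p ∈ Hp := (Hp.orthogonalProjectionOnto x).2
    have hmmem : m ∈ Hpᗮ := Submodule.sub_starProjection_mem_orthogonal (K := Hp) x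
    have hx : x = p + m := by rw [hm]; abel
    have h1 : (inner ℂ (Aφ p) m : ℂ) = 0 :=
      Submodule.inner_right_of_mem_orthogonal (hinvp p hpmem) hmmem
    have h2 : (inner ℂ (Aφ m) p : ℂ) = 0 :=
      Submodule.inner_left_of_mem_orthogonal hpmem (hinvm m hmmem)
    conv_lhs => rw [hx]
    rw [map_add, inner_add_left, inner_add_right, inner_add_right, h1, h2]
    simp
  -- main bound on L
  set g : L →L[ℂ] Hp := (Hp.orthogonalProjectionOnto).comp (L.subtypeL) with hg
  set D : ℝ := 1 + ‖Aφ‖ / c with hD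
  have hD1 : (1:ℝ) ≤ D := by
    rw [hD]
    have h0 : 0 ≤ ‖Aφ‖ / c := by positivity
    linarith
  have hDpos : 0 < D := lt_of_lt_of_le one_pos hD1
  have key : ∀ x : L, ‖x‖^2 ≤ D * ‖g x‖^2 := by
    intro x
    set p : A := (Hp.orthogonalProjectionOnto (x:A) : A) with hp
    set m : A := (x:A) - p with hm
    have hpmem : p ∈ Hp := (Hp.orthogonalProjectionOnto (x:A)).2
    have hmmem : m ∈ Hpᗮ := Submodule.sub_starProjection_mem_orthogonal (K := Hp) (x:A)
    have hnn : 0 ≤ RCLike.re (inner ℂ (Aφ (x:A)) (x:A) : ℂ) := by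
      rcases eq_or_ne (x:A) 0 with h | h
      · simp [h]
      · exact (hLpos _ x.2 h).le
    have hd := hdecomp (x:A)
    have hmneg := hcneg m hmmem
    have hp2 : RCLike.re (inner ℂ (Aφ p) p : ℂ) ≤ ‖Aφ‖ * ‖p‖^2 := by
      have h2 : ‖(inner ℂ (Aφ p) p : ℂ)‖ ≤ ‖Aφ p‖ * ‖p‖ := norm_inner_le_norm _ _
      have h3 : ‖Aφ p‖ ≤ ‖Aφ‖ * ‖p‖ := Aφ.le_opNorm _
      have h4 := abs_le.mp (RCLike.abs_re_le_norm (inner ℂ (Aφ p) p : ℂ))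
      nlinarith [norm_nonneg p, norm_nonneg (Aφ p)]
    have hpyth : ‖(x:A)‖^2 = ‖p‖^2 + ‖m‖^2 := by
      have hx : (x:A) = p + m := by rw [hm]; abel
      have hpm : (inner ℂ p m : ℂ) = 0 := Submodule.inner_right_of_mem_orthogonal hpmem hmmem
      rw [hx, @norm_add_sq ℂ _ _ _ _ p m, hpm]
      simp
    have hxnorm : ‖x‖ = ‖(x:A)‖ := rfl
    have hgx : ‖g x‖ = ‖p‖ := by
      have h1 : g x = Hp.orthogonalProjectionOnto (x:A) := rfl
      rw [h1, Submodule.coe_norm, ← hp]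
    rw [hxnorm, hgx, hpyth]
    -- c‖m‖² ≤ -re⟨Aφm,m⟩ ≤ re⟨Aφp,p⟩ ≤ ‖Aφ‖‖p‖²
    have hm2 : c * ‖m‖^2 ≤ ‖Aφ‖ * ‖p‖^2 := by
      have : -(RCLike.re (inner ℂ (Aφ m) m : ℂ)) ≤ RCLike.re (inner ℂ (Aφ p) p : ℂ) := by
        linarith [hnn, hd]
      linarith [hmneg]
    have hm3 : ‖m‖^2 ≤ (‖Aφ‖ / c) * ‖p‖^2 := by
      rw [div_mul_eq_mul_div, le_div_iff₀ hc]
      nlinarith [hm2]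
    rw [hD]
    nlinarith [hm3]
  -- antilipschitz
  have hbound : ∀ x : L, ‖x‖ ≤ (Real.sqrt D).toNNReal * ‖g x‖ := by
    intro x
    have h2 : ‖x‖^2 ≤ (Real.sqrt D * ‖g x‖)^2 := by
      rw [mul_pow, Real.sq_sqrt hDpos.le]
      exact key x
    have h3 := Real.sqrt_le_sqrt h2
    rw [Real.sqrt_sq (norm_nonneg _), Real.sqrt_sq (by positivity)] at h3
    rwa [Real.coe_toNNReal _ (Real.sqrt_nonneg _)]
  have hanti := g.antilipschitz_of_bound hbound
  exact ⟨hanti.injective, hanti.isClosed_range g.uniformContinuous⟩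
end

section
/- Let A be a Hilbert space, and α, f, σ, δ ∈ B(A) with α self-adjoint, such that id_A = σ∘α + δ∘f*. Choose ε > 0 with ε·‖σ‖ < 1, and let Q be the spectral subspace of α corresponding to (-ε, ε], with inclusion i_Q and orthogonal projection π_Q. Then the operator π_Q∘δ∘f*∘i_Q : Q → Q is invertible; consequently f*∘i_Q : Q → A is injective with closed image. -/
open ContinuousLinearMap

/-- Let `A` be a Hilbert space and `α, f, σ, δ` bounded operators with `α`
self-adjoint, satisfying `id = σ∘α + δ∘f*`. Let `ε > 0` with `ε·‖σ‖ < 1` and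
let `Q` be the spectral subspace of `α` for `(-ε, ε]` (a closed subspace on
which `‖α‖ ≤ ε`). Then the operator `π_Q ∘ δ ∘ f* ∘ i_Q : Q → Q` is
invertible, and consequently `f* ∘ i_Q : Q → A` is injective with closed
image. -/
theorem spectral_cutoff_invertible
    {A : Type*} [NormedAddCommGroup A] [InnerProductSpace ℂ A] [CompleteSpace A]
    (α f σ δ : A →L[ℂ] A) (hsa : IsSelfAdjoint α)
    (hid : ContinuousLinearMap.id ℂ A = σ ∘L α + δ ∘L adjoint f)
    (ε : ℝ) (hε : 0 < ε) (hεσ : ε * ‖σ‖ < 1)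
    (Q : Submodule ℂ A) [Submodule.HasOrthogonalProjection Q]
    (hQc : IsClosed (Q : Set A))
    (hQinv : ∀ x ∈ Q, α x ∈ Q)
    (hQnorm : ∀ x ∈ Q, ‖α x‖ ≤ ε * ‖x‖) :
    Function.Bijective
      (fun x : Q => Submodule.orthogonalProjectionOnto Q (δ (adjoint f (x : A)))) ∧
    Function.Injective (fun x : Q => adjoint f (x : A)) ∧
    IsClosed (Set.range (fun x : Q => adjoint f (x : A))) := by
  haveI : CompleteSpace Q := hQc.completeSpace_coe
  -- the operators
  set πQ : A →L[ℂ] Q := Submodule.orthogonalProjectionOnto Q with hπQ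
  set T : Q →L[ℂ] Q := πQ ∘L δ ∘L adjoint f ∘L Q.subtypeL with hT
  set S : Q →L[ℂ] Q := πQ ∘L σ ∘L α ∘L Q.subtypeL with hS
  have hTS : T = 1 - S := by
    ext x
    have hx : (x : A) = σ (α (x : A)) + δ (adjoint f (x : A)) := by
      have := congrArg (fun g : A →L[ℂ] A => g (x : A)) hid
      simpa using this
    have hπx : πQ (x : A) = x := Submodule.orthogonalProjectionOnto_mem_subspace_eq_self x
    have key : S x + T x = x := by
      have h1 : S x + T x = πQ (σ (α (x : A)) + δ (adjoint f (x : A))) := by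
        simp [hS, hT, map_add]
      rw [h1, ← hx, hπx]
    have : T x = x - S x := eq_sub_of_add_eq' key
    simpa using congrArg Subtype.val this
  have hSnorm : ‖S‖ < 1 := by
    have h1 : ‖S‖ ≤ ε * ‖σ‖ := by
      apply ContinuousLinearMap.opNorm_le_bound _ (by positivity)
      intro x
      have h2 : ‖S x‖ ≤ ‖σ (α (x : A))‖ := by
        have : S x = πQ (σ (α (x : A))) := rfl
        rw [this]
        calc ‖πQ (σ (α (x : A)))‖ ≤ ‖πQ‖ * ‖σ (α (x : A))‖ := πQ.le_opNorm _
          _ ≤ 1 * ‖σ (α (x : A))‖ := by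
              gcongr; exact Submodule.orthogonalProjectionOnto_norm_le Q
          _ = ‖σ (α (x : A))‖ := one_mul _
      calc ‖S x‖ ≤ ‖σ (α (x : A))‖ := h2
        _ ≤ ‖σ‖ * ‖α (x : A)‖ := σ.le_opNorm _
        _ ≤ ‖σ‖ * (ε * ‖(x : A)‖) := by
            gcongr; exact hQnorm x x.2
        _ = ε * ‖σ‖ * ‖x‖ := by rw [Submodule.norm_coe]; ring
    exact lt_of_le_of_lt h1 hεσ
  -- T is a unit
  set u : (Q →L[ℂ] Q)ˣ := Units.oneSub S hSnorm with hu
  have huval : (u : Q →L[ℂ] Q) = T := by rw [hTS]; rfl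
  have hleft : ∀ x : Q, (↑u⁻¹ : Q →L[ℂ] Q) (T x) = x := by
    intro x
    have : ((↑u⁻¹ * ↑u : Q →L[ℂ] Q)) x = x := by
      rw [u.inv_mul]; rfl
    rwa [← huval]
  have hright : ∀ x : Q, T ((↑u⁻¹ : Q →L[ℂ] Q) x) = x := by
    intro x
    have : ((↑u * ↑u⁻¹ : Q →L[ℂ] Q)) x = x := by
      rw [u.mul_inv]; rfl
    rwa [huval] at this
  have hTbij : Function.Bijective T :=
    ⟨Function.LeftInverse.injective hleft, Function.RightInverse.surjective hright⟩
  set g : Q →L[ℂ] A := adjoint f ∘L Q.subtypeL with hg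
  -- bounded below
  have hbdd : ∀ x : Q, ‖x‖ ≤ (‖(↑u⁻¹ : Q →L[ℂ] Q)‖ * ‖πQ ∘L δ‖) * ‖g x‖ := by
    intro x
    calc ‖x‖ = ‖(↑u⁻¹ : Q →L[ℂ] Q) (T x)‖ := by rw [hleft]
      _ ≤ ‖(↑u⁻¹ : Q →L[ℂ] Q)‖ * ‖T x‖ := le_opNorm _ _
      _ ≤ ‖(↑u⁻¹ : Q →L[ℂ] Q)‖ * (‖πQ ∘L δ‖ * ‖g x‖) := by
          gcongr
          have : T x = (πQ ∘L δ) (g x) := rfl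
          rw [this]; exact le_opNorm _ _
      _ = (‖(↑u⁻¹ : Q →L[ℂ] Q)‖ * ‖πQ ∘L δ‖) * ‖g x‖ := by ring
  have hanti : AntilipschitzWith (‖(↑u⁻¹ : Q →L[ℂ] Q)‖₊ * ‖πQ ∘L δ‖₊) g :=
    g.antilipschitz_of_bound (fun x => by
      simpa [NNReal.coe_mul, coe_nnnorm] using hbdd x)
  refine ⟨hTbij, hanti.injective, ?_⟩
  have : Set.range (fun x : Q => adjoint f (x : A)) = Set.range g := rfl
  rw [this]
  exact hanti.isClosed_range g.uniformContinuous
end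

section
/- Let A be a Hilbert space, M ⊆ B(A) a von Neumann algebra, α ∈ M a positive injective self-adjoint operator with spectral family E_λ, and f ∈ M. Suppose h ∈ B(A) is a bounded operator with h∘α = α∘f. Then h belongs to M. In particular, h is the weak limit as μ → 0 of the operators α∘f∘(∫₀^∞ η_μ(λ)^{-1} dE_λ) where η_μ(λ) = 1 for λ < μ and η_μ(λ) = λ for λ ≥ μ. -/
open ContinuousLinearMap

/-- Let `A` be a Hilbert space, `M` a von Neumann algebra on `A`, `α ∈ M` a
positive injective self-adjoint operator and `f ∈ M`. If `h` is any bounded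
operator with `h∘α = α∘f`, then `h` belongs to `M` (being the weak limit of
the operators `α∘f∘η_μ(α)⁻¹ ∈ M` as `μ → 0`). -/
theorem intertwiner_mem_vonNeumannAlgebra
    {A : Type*} [NormedAddCommGroup A] [InnerProductSpace ℂ A] [CompleteSpace A]
    (M : VonNeumannAlgebra A) (α f h : A →L[ℂ] A)
    (hαM : α ∈ M) (hfM : f ∈ M)
    (hαsa : IsSelfAdjoint α) (hαpos : α.IsPositive)
    (hαinj : Function.Injective α)
    (hint : h ∘L α = α ∘L f) :
    h ∈ M := by
  have hint' : h * α = α * f := hint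
  -- α has dense range
  have htop : (LinearMap.range (α : A →ₗ[ℂ] A)).topologicalClosure = ⊤ := by
    rw [Submodule.topologicalClosure_eq_top_iff, Submodule.eq_bot_iff]
    intro x hx
    apply hαinj
    rw [map_zero]
    refine ext_inner_left ℂ fun y => ?_
    rw [inner_zero_right, ← hαsa.adjoint_eq, ContinuousLinearMap.adjoint_inner_right]
    exact hx _ ⟨y, rfl⟩
  have hdr : DenseRange (⇑α) := by
    have h2 : (LinearMap.range (α : A →ₗ[ℂ] A) : Set A) = Set.range ⇑α := by
      ext x; simp [LinearMap.mem_range]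
    rw [DenseRange, dense_iff_closure_eq, ← h2, ← Submodule.topologicalClosure_coe, htop,
      Submodule.top_coe]
  rw [← M.commutant_commutant, VonNeumannAlgebra.mem_commutant_iff]
  intro z hz
  have hzα : α * z = z * α := (VonNeumannAlgebra.mem_commutant_iff.mp hz) α hαM
  have hzf : f * z = z * f := (VonNeumannAlgebra.mem_commutant_iff.mp hz) f hfM
  have key : (z * h) * α = (h * z) * α := by
    calc (z * h) * α = z * (α * f) := by rw [mul_assoc, hint']
    _ = (α * z) * f := by rw [hzα, mul_assoc]
    _ = α * (z * f) := by rw [mul_assoc]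
    _ = (α * f) * z := by rw [← hzf, mul_assoc]
    _ = h * (α * z) := by rw [← hint', mul_assoc]
    _ = (h * z) * α := by rw [hzα, mul_assoc]
  have heq : (z * h : A →L[ℂ] A) = h * z := by
    apply ContinuousLinearMap.coeFn_injective
    exact hdr.equalizer (z * h).continuous (h * z).continuous
      (funext fun y => DFunLike.congr_fun key y)
  exact heq
end
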